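/- (Completeness of the m.p. scheme, single transition case.) Let h be a multivalued refinement of a Boolean model f, and let x → y be an asynchronous transition of h. Then for any m.p. state x̂ compatible with x, there exists a trajectory (of length at most 2) from x̂ in the m.p. dynamics of f ending at an m.p. state ŷ compatible with y. -/

import Mathlib

/-!
Compatibility of x̂ with x gives α(x) ⊆ γ(x̂), so the Boolean witness that the refinement
provides for the moving coordinate j₀ also enables the m.p. transition at j₀. Only coordinate j₀
of x̂ has to change: to `inc` (resp. `dec`) while y_{j₀} stays strictly between the bounds, or to
`1` (resp. `0`) when y_{j₀} reaches a bound, which takes one extra m.p. step through `inc`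
(resp. `dec`) unless x̂_{j₀} is already there.
-/

/-- Activity levels of the most permissive scheme: 0, 1, increasing, decreasing. -/
inductive MPLevel : Type
  | zero | one | inc | dec
deriving DecidableEq

/-- The set γ(x̂) of Boolean states compatible with an m.p. state x̂. -/
def mpGamma {n : ℕ} (x : Fin n → MPLevel) : Set (Fin n → Bool) :=
  {x' | ∀ j, (x j = MPLevel.zero → x' j = false) ∧ (x j = MPLevel.one → x' j = true)}

/-- The set α(x) of Boolean states compatible with a multivalued state x. -/
def mvAlpha {n : ℕ} (m x : Fin n → ℕ) : Set (Fin n → Bool) :=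
  {x' | ∀ j, (x j = 0 → x' j = false) ∧ (x j = m j → x' j = true)}

/-- Coordinatewise embedding of Boolean states into m.p. states. -/
def embBM {n : ℕ} (x : Fin n → Bool) : Fin n → MPLevel :=
  fun j => if x j then MPLevel.one else MPLevel.zero

/-- Embedding of a Boolean state into X = ∏ {0,…,m_j}, sending 1 to m_j. -/
def embX {n : ℕ} (m : Fin n → ℕ) (x : Fin n → Bool) : Fin n → ℕ :=
  fun j => if x j then m j else 0

/-- Transition of the most permissive dynamics of f at coordinate j0. -/
def mpTransAt {n : ℕ} (f : (Fin n → Bool) → Fin n → Bool) (j0 : Fin n)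
    (x y : Fin n → MPLevel) : Prop :=
  (∀ j, j ≠ j0 → y j = x j) ∧
    (((x j0 = MPLevel.zero ∨ x j0 = MPLevel.dec) ∧ (∃ x' ∈ mpGamma x, f x' j0 = true) ∧ y j0 = MPLevel.inc) ∨
     ((x j0 = MPLevel.one ∨ x j0 = MPLevel.inc) ∧ (∃ x' ∈ mpGamma x, f x' j0 = false) ∧ y j0 = MPLevel.dec) ∨
     (x j0 = MPLevel.inc ∧ y j0 = MPLevel.one) ∨
     (x j0 = MPLevel.dec ∧ y j0 = MPLevel.zero))

/-- Transition of the most permissive dynamics of f. -/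
def mpTrans {n : ℕ} (f : (Fin n → Bool) → Fin n → Bool) (x y : Fin n → MPLevel) : Prop :=
  ∃ j0, mpTransAt f j0 x y

/-- Transition of the partial J-most-permissive dynamics of f at coordinate j0. -/
def pmpTransAt {n : ℕ} (J : Set (Fin n)) (f : (Fin n → Bool) → Fin n → Bool) (j0 : Fin n)
    (x y : Fin n → MPLevel) : Prop :=
  (∀ j, j ≠ j0 → y j = x j) ∧
    (((x j0 = MPLevel.zero ∨ x j0 = MPLevel.dec) ∧ (∃ x' ∈ mpGamma x, f x' j0 = true) ∧ y j0 = MPLevel.inc) ∨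
     ((x j0 = MPLevel.one ∨ x j0 = MPLevel.inc) ∧ (∃ x' ∈ mpGamma x, f x' j0 = false) ∧ y j0 = MPLevel.dec) ∨
     (x j0 = MPLevel.inc ∧ y j0 = MPLevel.one) ∨
     (x j0 = MPLevel.dec ∧ y j0 = MPLevel.zero) ∨
     (j0 ∉ J ∧ x j0 = MPLevel.zero ∧ (∃ x' ∈ mpGamma x, f x' j0 = true) ∧ y j0 = MPLevel.one) ∨
     (j0 ∉ J ∧ x j0 = MPLevel.one ∧ (∃ x' ∈ mpGamma x, f x' j0 = false) ∧ y j0 = MPLevel.zero))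

/-- Transition of the partial J-most-permissive dynamics of f. -/
def pmpTrans {n : ℕ} (J : Set (Fin n)) (f : (Fin n → Bool) → Fin n → Bool)
    (x y : Fin n → MPLevel) : Prop :=
  ∃ j0, pmpTransAt J f j0 x y

/-- A state of X_{J m.p.}: coordinates outside J are Boolean. -/
def inXJ {n : ℕ} (J : Set (Fin n)) (x : Fin n → MPLevel) : Prop :=
  ∀ j, j ∉ J → (x j = MPLevel.zero ∨ x j = MPLevel.one)

/-- Asynchronous transition of a Boolean model f. -/
def asyncTransB {n : ℕ} (f : (Fin n → Bool) → Fin n → Bool) (x y : Fin n → Bool) : Prop :=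
  ∃ j0, f x j0 ≠ x j0 ∧ y j0 = f x j0 ∧ ∀ j, j ≠ j0 → y j = x j

/-- Asynchronous transition of a multivalued model h (one coordinate moves by 1 toward its target). -/
def asyncTrans {n : ℕ} (h : (Fin n → ℕ) → Fin n → ℕ) (x y : Fin n → ℕ) : Prop :=
  ∃ j0, h x j0 ≠ x j0 ∧ (∀ j, j ≠ j0 → y j = x j) ∧
    ((x j0 < h x j0 ∧ y j0 = x j0 + 1) ∨ (h x j0 < x j0 ∧ y j0 = x j0 - 1))

/-- An m.p. state x̂ is compatible with a multivalued state x. -/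
def mpCompat {n : ℕ} (m x : Fin n → ℕ) (xh : Fin n → MPLevel) : Prop :=
  ∀ j, (x j = 0 → xh j = MPLevel.zero) ∧ (x j = m j → xh j = MPLevel.one) ∧
    (0 < x j → x j < m j → (xh j = MPLevel.inc ∨ xh j = MPLevel.dec))

/-- h is a multivalued model on X = ∏ {0,…,m_j}: maps X to X, moving each coordinate by at most 1. -/
def isMVModel {n : ℕ} (m : Fin n → ℕ) (h : (Fin n → ℕ) → Fin n → ℕ) : Prop :=
  ∀ x, (∀ j, x j ≤ m j) → ∀ j, h x j ≤ m j ∧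
    (h x j = x j ∨ h x j = x j + 1 ∨ h x j + 1 = x j)

/-- h is a multivalued refinement of the Boolean model f. -/
def isRefinement {n : ℕ} (m : Fin n → ℕ) (f : (Fin n → Bool) → Fin n → Bool)
    (h : (Fin n → ℕ) → Fin n → ℕ) : Prop :=
  ∀ x, (∀ j, x j ≤ m j) → ∀ j,
    (h x j < x j → ∃ x' ∈ mvAlpha m x, f x' j = false ∧ x' j = true) ∧
    (x j < h x j → ∃ x' ∈ mvAlpha m x, f x' j = true ∧ x' j = false)

/-- A literal in a DNF: a regulator index, a polarity, and a threshold (used in the multivalued reading). -/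
structure Lit (n : ℕ) where
  idx : Fin n
  pos : Bool
  thr : ℕ

/-- Boolean evaluation of a literal (threshold ignored). -/
def evalLitB {n : ℕ} (x : Fin n → Bool) (l : Lit n) : Bool :=
  if l.pos then x l.idx else !(x l.idx)

/-- Multivalued evaluation of a literal: x_idx ≥ thr+1 for a positive literal, x_idx < thr+1 otherwise. -/
def evalLitM {n : ℕ} (x : Fin n → ℕ) (l : Lit n) : Bool :=
  if l.pos then decide (l.thr + 1 ≤ x l.idx) else decide (x l.idx < l.thr + 1)

/-- Boolean evaluation of a DNF (list of conjunctive clauses). -/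
def evalDNFB {n : ℕ} (x : Fin n → Bool) (φ : List (List (Lit n))) : Bool :=
  φ.any fun c => c.all (evalLitB x)

/-- Multivalued evaluation of a DNF via the thresholds. -/
def evalDNFM {n : ℕ} (x : Fin n → ℕ) (φ : List (List (Lit n))) : Bool :=
  φ.any fun c => c.all (evalLitM x)

/-- Refinement built from the DNF threshold parameterisation:
h_j(x) = max(0, min(m_j, x_j + H_j(x))) with H_j(x) = +1 iff the multivalued DNF of f_j is true. -/
def hDNF {n : ℕ} (m : Fin n → ℕ) (φ : Fin n → List (List (Lit n)))
    (x : Fin n → ℕ) : Fin n → ℕ :=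
  fun j => if evalDNFM x (φ j) then min (m j) (x j + 1) else x j - 1

def mpReachWithinTwo {n : ℕ} (f : (Fin n → Bool) → Fin n → Bool) (xh yh : Fin n → MPLevel) :
    Prop :=
  yh = xh ∨ mpTrans f xh yh ∨ ∃ z, mpTrans f xh z ∧ mpTrans f z yh

open Function

section Compat

variable {n : ℕ} {m x y : Fin n → ℕ} {xh : Fin n → MPLevel}

lemma mpCompat.eq_zero (hc : mpCompat m x xh) (hx : ∀ j, x j ≤ m j) {j : Fin n}
    (hj : xh j = .zero) : x j = 0 := by
  by_contra hne
  rcases (hx j).lt_or_eq with hlt | heq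
  · rcases (hc j).2.2 (Nat.pos_of_ne_zero hne) hlt with h | h <;> simp [h] at hj
  · simp [(hc j).2.1 heq] at hj

lemma mpCompat.eq_bound (hc : mpCompat m x xh) (hx : ∀ j, x j ≤ m j) {j : Fin n}
    (hj : xh j = .one) : x j = m j := by
  by_contra hne
  rcases Nat.eq_zero_or_pos (x j) with h0 | hpos
  · simp [(hc j).1 h0] at hj
  · rcases (hc j).2.2 hpos ((hx j).lt_of_ne hne) with h | h <;> simp [h] at hj

lemma mvAlpha_subset_mpGamma (hc : mpCompat m x xh) (hx : ∀ j, x j ≤ m j) :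
    mvAlpha m x ⊆ mpGamma xh := fun _ hx' j =>
  ⟨fun hj => (hx' j).1 (hc.eq_zero hx hj), fun hj => (hx' j).2 (hc.eq_bound hx hj)⟩

lemma mpCompat_update (hc : mpCompat m x xh) {j₀ : Fin n} (hy : ∀ j, j ≠ j₀ → y j = x j)
    {l : MPLevel} (h0 : y j₀ = 0 → l = .zero) (h1 : y j₀ = m j₀ → l = .one)
    (hmid : 0 < y j₀ → y j₀ < m j₀ → l = .inc ∨ l = .dec) :
    mpCompat m y (update xh j₀ l) := by
  intro j
  by_cases hj : j = j₀
  · subst hj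
    simpa only [update_self] using ⟨h0, h1, hmid⟩
  · simpa only [update_of_ne hj, hy j hj] using hc j

end Compat

section Transitions

variable {n : ℕ} {f : (Fin n → Bool) → Fin n → Bool} {xh : Fin n → MPLevel} {j : Fin n}

lemma mpTrans_update_inc (hw : ∃ x' ∈ mpGamma xh, f x' j = true)
    (hj : xh j = .zero ∨ xh j = .dec) : mpTrans f xh (update xh j .inc) :=
  ⟨j, fun _ hi => update_of_ne hi _ _, Or.inl ⟨hj, hw, update_self _ _ _⟩⟩

lemma mpTrans_update_dec (hw : ∃ x' ∈ mpGamma xh, f x' j = false)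
    (hj : xh j = .one ∨ xh j = .inc) : mpTrans f xh (update xh j .dec) :=
  ⟨j, fun _ hi => update_of_ne hi _ _, Or.inr (Or.inl ⟨hj, hw, update_self _ _ _⟩)⟩

lemma mpTrans_update_one (hj : xh j = .inc) : mpTrans f xh (update xh j .one) :=
  ⟨j, fun _ hi => update_of_ne hi _ _, Or.inr (Or.inr (Or.inl ⟨hj, update_self _ _ _⟩))⟩

lemma mpTrans_update_zero (hj : xh j = .dec) : mpTrans f xh (update xh j .zero) :=
  ⟨j, fun _ hi => update_of_ne hi _ _, Or.inr (Or.inr (Or.inr ⟨hj, update_self _ _ _⟩))⟩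

lemma mpReachWithinTwo_update_inc (hw : ∃ x' ∈ mpGamma xh, f x' j = true)
    (hj : xh j ≠ .one) : mpReachWithinTwo f xh (update xh j .inc) := by
  cases hxj : xh j
  · exact Or.inr (Or.inl (mpTrans_update_inc hw (Or.inl hxj)))
  · exact absurd hxj hj
  · exact Or.inl (hxj ▸ update_eq_self j xh)
  · exact Or.inr (Or.inl (mpTrans_update_inc hw (Or.inr hxj)))

lemma mpReachWithinTwo_update_dec (hw : ∃ x' ∈ mpGamma xh, f x' j = false)
    (hj : xh j ≠ .zero) : mpReachWithinTwo f xh (update xh j .dec) := by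
  cases hxj : xh j
  · exact absurd hxj hj
  · exact Or.inr (Or.inl (mpTrans_update_dec hw (Or.inl hxj)))
  · exact Or.inr (Or.inl (mpTrans_update_dec hw (Or.inr hxj)))
  · exact Or.inl (hxj ▸ update_eq_self j xh)

lemma mpReachWithinTwo_update_one (hw : ∃ x' ∈ mpGamma xh, f x' j = true)
    (hj : xh j ≠ .one) : mpReachWithinTwo f xh (update xh j .one) := by
  rcases hxj : xh j
  case inc => exact Or.inr (Or.inl (mpTrans_update_one hxj))
  case one => exact absurd hxj hj
  all_goals
    refine Or.inr (Or.inr ⟨_, mpTrans_update_inc hw (by simp [hxj]), ?_⟩)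
    simpa only [update_idem] using mpTrans_update_one (update_self j MPLevel.inc xh)

lemma mpReachWithinTwo_update_zero (hw : ∃ x' ∈ mpGamma xh, f x' j = false)
    (hj : xh j ≠ .zero) : mpReachWithinTwo f xh (update xh j .zero) := by
  rcases hxj : xh j
  case dec => exact Or.inr (Or.inl (mpTrans_update_zero hxj))
  case zero => exact absurd hxj hj
  all_goals
    refine Or.inr (Or.inr ⟨_, mpTrans_update_dec hw (by simp [hxj]), ?_⟩)
    simpa only [update_idem] using mpTrans_update_zero (update_self j MPLevel.dec xh)

end Transitions

section Step

variable {n : ℕ} {f : (Fin n → Bool) → Fin n → Bool} {m x y : Fin n → ℕ}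
  {xh : Fin n → MPLevel} {j₀ : Fin n}

lemma exists_mpReachWithinTwo_of_increase (hx : ∀ j, x j ≤ m j) (hc : mpCompat m x xh)
    (hy : ∀ j, j ≠ j₀ → y j = x j) (hy₀ : y j₀ = x j₀ + 1) (hlt : x j₀ < m j₀)
    (hw : ∃ x' ∈ mpGamma xh, f x' j₀ = true) :
    ∃ yh, mpCompat m y yh ∧ mpReachWithinTwo f xh yh := by
  have hne : xh j₀ ≠ .one := fun h1 => hlt.ne (hc.eq_bound hx h1)
  by_cases hM : y j₀ = m j₀
  · exact ⟨_, mpCompat_update hc hy (by omega) (fun _ => rfl) (by omega),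
      mpReachWithinTwo_update_one hw hne⟩
  · exact ⟨_, mpCompat_update hc hy (by omega) (absurd · hM) (fun _ _ => Or.inl rfl),
      mpReachWithinTwo_update_inc hw hne⟩

lemma exists_mpReachWithinTwo_of_decrease (hx : ∀ j, x j ≤ m j) (hc : mpCompat m x xh)
    (hy : ∀ j, j ≠ j₀ → y j = x j) (hy₀ : y j₀ = x j₀ - 1) (hpos : 0 < x j₀)
    (hw : ∃ x' ∈ mpGamma xh, f x' j₀ = false) :
    ∃ yh, mpCompat m y yh ∧ mpReachWithinTwo f xh yh := by
  have hne : xh j₀ ≠ .zero := fun h0 => hpos.ne' (hc.eq_zero hx h0)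
  have := hx j₀
  by_cases hZ : y j₀ = 0
  · exact ⟨_, mpCompat_update hc hy (fun _ => rfl) (by omega) (by omega),
      mpReachWithinTwo_update_zero hw hne⟩
  · exact ⟨_, mpCompat_update hc hy (absurd · hZ) (by omega) (fun _ _ => Or.inr rfl),
      mpReachWithinTwo_update_dec hw hne⟩

end Step

lemma isRefinement.lt_bound_of_lt {n : ℕ} {m : Fin n → ℕ} {f : (Fin n → Bool) → Fin n → Bool}
    {h : (Fin n → ℕ) → Fin n → ℕ} (href : isRefinement m f h) {x : Fin n → ℕ}
    (hx : ∀ j, x j ≤ m j) {j : Fin n} (hlt : x j < h x j) : x j < m j := by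
  obtain ⟨x', hx', -, hx'j⟩ := (href x hx j).2 hlt
  refine (hx j).lt_of_ne fun hM => ?_
  simp [(hx' j).2 hM] at hx'j

theorem mp_completeness_step_general {n : ℕ} (f : (Fin n → Bool) → Fin n → Bool)
    (m : Fin n → ℕ) (h : (Fin n → ℕ) → Fin n → ℕ) (href : isRefinement m f h)
    (x y : Fin n → ℕ) (hx : ∀ j, x j ≤ m j) (ht : asyncTrans h x y)
    (xh : Fin n → MPLevel) (hc : mpCompat m x xh) :
    ∃ yh : Fin n → MPLevel, mpCompat m y yh ∧
      (yh = xh ∨ mpTrans f xh yh ∨ ∃ z, mpTrans f xh z ∧ mpTrans f z yh) := by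
  obtain ⟨j₀, -, hy, ⟨hlt, hy₀⟩ | ⟨hlt, hy₀⟩⟩ := ht
  · obtain ⟨x', hx', hf, -⟩ := (href x hx j₀).2 hlt
    exact exists_mpReachWithinTwo_of_increase hx hc hy hy₀ (href.lt_bound_of_lt hx hlt)
      ⟨x', mvAlpha_subset_mpGamma hc hx hx', hf⟩
  · obtain ⟨x', hx', hf, -⟩ := (href x hx j₀).1 hlt
    exact exists_mpReachWithinTwo_of_decrease hx hc hy hy₀ (by omega)
      ⟨x', mvAlpha_subset_mpGamma hc hx hx', hf⟩

/-- completeness of the m.p. scheme, single transition: if x → y is an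
asynchronous transition of a refinement h of f, then from any m.p. state x̂ compatible with
x there is an m.p. trajectory of f of length at most 2 ending at a state ŷ compatible
with y. -/
theorem mp_completeness_step {n : ℕ} (f : (Fin n → Bool) → Fin n → Bool)
    (m : Fin n → ℕ) (hm : ∀ j, 1 ≤ m j) (hex : ∃ j, 1 < m j)
    (h : (Fin n → ℕ) → Fin n → ℕ) (hmv : isMVModel m h) (href : isRefinement m f h)
    (x y : Fin n → ℕ) (hx : ∀ j, x j ≤ m j) (ht : asyncTrans h x y)
    (xh : Fin n → MPLevel) (hc : mpCompat m x xh) :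
    ∃ yh : Fin n → MPLevel, mpCompat m y yh ∧
      (yh = xh ∨ mpTrans f xh yh ∨ ∃ z, mpTrans f xh z ∧ mpTrans f z yh) :=
  mp_completeness_step_general f m h href x y hx ht xh hc
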